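/- One shifting step does not increase the output entropy of a BSC: if S̄ is obtained from S ⊆ {0,1}^n by one shifting step, then H(U_{S̄} ⊕ Z^n) ≤ H(U_S ⊕ Z^n). -/

import Mathlib

/-!
Flipping the `i`-th coordinate of the output, `y ↦ flipAt i y`, is an involution that pairs up
the outputs. A shifting step along `i` keeps every pair sum `p(y) + p(flipAt i y)` and can only
spread the pair apart: inside a fibre of the projection forgetting coordinate `i`, the difference
`p(y) - p(flipAt i y)` receives `±(1 - 2α)` times the same weight from the two points of the
fibre, and the step turns an isolated upper point into an isolated lower one, so after the step
all contributions carry the sign of `y i`. Since `t ↦ -t log t` is concave, spreading a pair with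
fixed sum apart lowers its entropy.
-/

/-- Shannon entropy (in bits) of a distribution `p` on a finite type. -/
noncomputable def ent {Ω : Type*} [Fintype Ω] (p : Ω → ℝ) : ℝ :=
  ∑ x, -(p x * Real.logb 2 (p x))

/-- The distribution of `U_S ⊕ Z^n`, where `U_S` is uniform on `S` and `Z^n` is
i.i.d. Bernoulli(α), independent of `U_S`. -/
noncomputable def bscOut {n : ℕ} (S : Finset (Fin n → Bool)) (α : ℝ)
    (y : Fin n → Bool) : ℝ :=
  (S.card : ℝ)⁻¹ * ∑ x ∈ S, ∏ i, (if y i = x i then 1 - α else α)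

/-- `S_i`: members of `S` with `i`-th coordinate `1` whose flip-down is not in `S`. -/
def shiftSet {n : ℕ} (S : Finset (Fin n → Bool)) (i : Fin n) :
    Finset (Fin n → Bool) :=
  S.filter (fun x => x i = true ∧ Function.update x i false ∉ S)

/-- One step of the shifting procedure. -/
def shiftStepRel {n : ℕ} (S T : Finset (Fin n → Bool)) : Prop :=
  ∃ i : Fin n, (shiftSet S i).Nonempty ∧ (∀ j : Fin n, j < i → shiftSet S j = ∅) ∧
    T = (S \ shiftSet S i) ∪ (shiftSet S i).image (fun x => Function.update x i false)

open Finset Function Real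

section Concavity

theorem ConcaveOn.add_le_add_of_abs_sub_le {D : Set ℝ} {f : ℝ → ℝ} (hf : ConcaveOn ℝ D f)
    {a b a' b' : ℝ} (ha' : a' ∈ D) (hb' : b' ∈ D) (hsum : a + b = a' + b')
    (habs : |a - b| ≤ |a' - b'|) : f a' + f b' ≤ f a + f b := by
  wlog hle : b' ≤ a' generalizing a' b'
  · rw [add_comm (f a')]
    exact this hb' ha' (by linarith) (by rwa [abs_sub_comm b' a']) (by linarith)
  obtain heq | hlt := hle.eq_or_lt
  · subst heq
    rw [sub_self, abs_zero, abs_nonpos_iff, sub_eq_zero] at habs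
    obtain rfl : a = b' := by linarith
    obtain rfl : b = a := by linarith
    rfl
  · -- `(a, b)` is the convex combination `t • (a', b') + (1 - t) • (b', a')`
    have hd : 0 < a' - b' := sub_pos.2 hlt
    have hab := abs_le.1 (habs.trans_eq (abs_of_pos hd))
    set t := (a - b') / (a' - b')
    have ht0 : 0 ≤ t := div_nonneg (by linarith) hd.le
    have ht1 : t ≤ 1 := (div_le_one hd).2 (by linarith)
    have hta : t * a' + (1 - t) * b' = a := by
      have : t * (a' - b') = a - b' := div_mul_cancel₀ _ hd.ne'
      linarith
    have htb : (1 - t) * a' + t * b' = b := by linarith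
    have h1 := hf.2 ha' hb' ht0 (sub_nonneg.2 ht1) (by ring)
    have h2 := hf.2 ha' hb' (sub_nonneg.2 ht1) ht0 (by ring)
    simp only [smul_eq_mul, hta, htb] at h1 h2
    linarith

theorem Function.Involutive.sum_le_sum_of_add_le {Ω : Type*} [Fintype Ω] {σ : Ω → Ω}
    (hσ : Involutive σ) {g h : Ω → ℝ} (hgh : ∀ x, g x + g (σ x) ≤ h x + h (σ x)) :
    ∑ x, g x ≤ ∑ x, h x := by
  have hpair (k : Ω → ℝ) : ∑ x, (k x + k (σ x)) = 2 * ∑ x, k x := by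
    rw [sum_add_distrib, Fintype.sum_bijective σ hσ.bijective (fun x => k (σ x)) k fun _ => rfl]
    ring
  linarith [hpair g, hpair h, sum_le_sum fun x (_ : x ∈ univ) => hgh x]

theorem concaveOn_neg_mul_logb_two : ConcaveOn ℝ (Set.Ici 0) fun x : ℝ => -(x * logb 2 x) := by
  have h : (fun x : ℝ => -(x * logb 2 x)) = fun x => (log 2)⁻¹ • negMulLog x := by
    funext x
    rw [smul_eq_mul, negMulLog, logb]
    ring
  exact h ▸ concaveOn_negMulLog.smul (inv_nonneg.2 (log_nonneg one_le_two))

theorem ent_le_ent_of_involutive {Ω : Type*} [Fintype Ω] {σ : Ω → Ω} (hσ : Involutive σ)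
    {p q : Ω → ℝ} (hq : ∀ y, 0 ≤ q y) (hsum : ∀ y, p y + p (σ y) = q y + q (σ y))
    (habs : ∀ y, |p y - p (σ y)| ≤ |q y - q (σ y)|) : ent q ≤ ent p :=
  hσ.sum_le_sum_of_add_le fun y =>
    concaveOn_neg_mul_logb_two.add_le_add_of_abs_sub_le (hq y) (hq (σ y)) (hsum y) (habs y)

end Concavity

section Shift

variable {n : ℕ} (S : Finset (Fin n → Bool)) (i : Fin n)

def shift : Finset (Fin n → Bool) :=
  (S \ shiftSet S i) ∪ (shiftSet S i).image (update · i false)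

theorem mem_shiftSet {x : Fin n → Bool} :
    x ∈ shiftSet S i ↔ x ∈ S ∧ x i = true ∧ update x i false ∉ S :=
  mem_filter

variable {S i}

theorem shiftSet_subset : shiftSet S i ⊆ S :=
  filter_subset _ _

theorem eq_of_update_false_eq {x x' : Fin n → Bool} (hx : x i = true) (hx' : x' i = true)
    (h : update x i false = update x' i false) : x = x' := by
  rw [← update_eq_self i x, ← update_eq_self i x', hx, hx']
  simpa using congrArg (update · i true) h

theorem sum_shift (g : (Fin n → Bool) → ℝ) :
    ∑ x ∈ shift S i, g x =
      ∑ x ∈ S \ shiftSet S i, g x + ∑ x ∈ shiftSet S i, g (update x i false) := by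
  have hdisj : Disjoint (S \ shiftSet S i) ((shiftSet S i).image (update · i false)) := by
    refine disjoint_right.2 fun _ hx hx' => ?_
    obtain ⟨z, hz, rfl⟩ := mem_image.1 hx
    exact ((mem_shiftSet S i).1 hz).2.2 (mem_sdiff.1 hx').1
  rw [shift, sum_union hdisj, sum_image fun x hx x' hx' =>
    eq_of_update_false_eq ((mem_shiftSet S i).1 hx).2.1 ((mem_shiftSet S i).1 hx').2.1]

theorem sum_shift_of_update_eq {g : (Fin n → Bool) → ℝ} (hg : ∀ x, g (update x i false) = g x) :
    ∑ x ∈ shift S i, g x = ∑ x ∈ S, g x := by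
  simp only [sum_shift, hg]
  exact sum_sdiff shiftSet_subset

theorem card_shift : #(shift S i) = #S := by
  have h := sum_shift_of_update_eq (S := S) (i := i) (g := fun _ => (1 : ℝ)) fun _ => rfl
  simp only [sum_const, nsmul_eq_mul, mul_one] at h
  exact_mod_cast h

theorem sum_sdiff_shiftSet_nonneg {g : (Fin n → Bool) → ℝ}
    (hg_neg : ∀ x, x i = true → g (update x i false) = -g x)
    (hg_nonneg : ∀ x, x i = false → 0 ≤ g x) :
    0 ≤ ∑ x ∈ S \ shiftSet S i, g x := by
  set R := S \ shiftSet S i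
  -- an upper point of `R` has its lower neighbour in `R`, where `g` takes the opposite value
  have hdown : (R.filter (· i = true)).image (update · i false) ⊆ R.filter (· i = false) := by
    intro z hz
    obtain ⟨x, hx, rfl⟩ := mem_image.1 hz
    obtain ⟨hxR, hxi⟩ := mem_filter.1 hx
    obtain ⟨hxS, hxsh⟩ := mem_sdiff.1 hxR
    have hzS : update x i false ∈ S := by
      by_contra h
      exact hxsh ((mem_shiftSet S i).2 ⟨hxS, hxi, h⟩)
    refine mem_filter.2 ⟨mem_sdiff.2 ⟨hzS, fun h => ?_⟩, update_self ..⟩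
    simpa using ((mem_shiftSet S i).1 h).2.1
  have hupper : ∑ x ∈ R.filter (· i = true), g x
      = -∑ x ∈ (R.filter (· i = true)).image (update · i false), g x := by
    rw [sum_image fun x hx x' hx' =>
      eq_of_update_false_eq (mem_filter.1 hx).2 (mem_filter.1 hx').2, ← sum_neg_distrib]
    exact sum_congr rfl fun x hx => by rw [hg_neg x (mem_filter.1 hx).2, neg_neg]
  have hle := sum_le_sum_of_subset_of_nonneg hdown fun x hx _ => hg_nonneg x (mem_filter.1 hx).2
  rw [← sum_filter_add_sum_filter_not R (· i = false)]
  simp only [Bool.not_eq_false, hupper]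
  linarith

theorem abs_sum_le_sum_shift {g : (Fin n → Bool) → ℝ}
    (hg_neg : ∀ x, x i = true → g (update x i false) = -g x)
    (hg_nonneg : ∀ x, x i = false → 0 ≤ g x) :
    |∑ x ∈ S, g x| ≤ ∑ x ∈ shift S i, g x := by
  have hA := sum_sdiff_shiftSet_nonneg (S := S) hg_neg hg_nonneg
  have hB : 0 ≤ ∑ x ∈ shiftSet S i, g (update x i false) :=
    sum_nonneg fun x _ => hg_nonneg _ (update_self ..)
  have hS : ∑ x ∈ S, g x
      = ∑ x ∈ S \ shiftSet S i, g x - ∑ x ∈ shiftSet S i, g (update x i false) := by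
    rw [← sum_sdiff shiftSet_subset, sub_eq_add_neg, ← sum_neg_distrib]
    congr 1
    exact sum_congr rfl fun x hx => by rw [hg_neg x ((mem_shiftSet S i).1 hx).2.1, neg_neg]
  rw [sum_shift, hS, abs_le]
  constructor <;> linarith

end Shift

section BSC

variable {n : ℕ} (α : ℝ)

noncomputable def bscTransProb (b c : Bool) : ℝ := if b = c then 1 - α else α

noncomputable def bscKernel (y x : Fin n → Bool) : ℝ := ∏ j, bscTransProb α (y j) (x j)

def flipAt (i : Fin n) (y : Fin n → Bool) : Fin n → Bool := update y i (!y i)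

variable {α}

theorem flipAt_involutive (i : Fin n) : Involutive (flipAt i) := fun y => by
  simp [flipAt]

theorem bscTransProb_nonneg (h0 : 0 ≤ α) (h1 : α ≤ 1) (b c : Bool) :
    0 ≤ bscTransProb α b c := by
  unfold bscTransProb
  split_ifs <;> linarith

theorem bscTransProb_add_not (b c : Bool) : bscTransProb α b c + bscTransProb α (!b) c = 1 := by
  cases b <;> cases c <;> simp [bscTransProb]

theorem bscTransProb_sub_not (b c : Bool) :
    bscTransProb α b c - bscTransProb α (!b) c = if b = c then 1 - 2 * α else -(1 - 2 * α) := by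
  cases b <;> cases c <;> simp [bscTransProb] <;> ring

theorem prod_compl_update {M : Type*} [CommMonoid M] (i : Fin n) (f : Fin n → Bool → M)
    (x : Fin n → Bool) (b : Bool) :
    ∏ j ∈ {i}ᶜ, f j (update x i b j) = ∏ j ∈ {i}ᶜ, f j (x j) :=
  prod_congr rfl fun j hj => by rw [update_of_ne (by simpa using hj)]

theorem bscKernel_flipAt_add (i : Fin n) (y x : Fin n → Bool) :
    bscKernel α y x + bscKernel α (flipAt i y) x = ∏ j ∈ {i}ᶜ, bscTransProb α (y j) (x j) := by
  simp only [bscKernel, Fintype.prod_eq_mul_prod_compl i, flipAt, update_self,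
    prod_compl_update i (fun j b => bscTransProb α b (x j)), ← add_mul, bscTransProb_add_not,
    one_mul]

theorem bscKernel_sub_flipAt (i : Fin n) (y x : Fin n → Bool) :
    bscKernel α y x - bscKernel α (flipAt i y) x =
      (if y i = x i then 1 - 2 * α else -(1 - 2 * α)) *
        ∏ j ∈ {i}ᶜ, bscTransProb α (y j) (x j) := by
  simp only [bscKernel, Fintype.prod_eq_mul_prod_compl i, flipAt, update_self,
    prod_compl_update i (fun j b => bscTransProb α b (x j)), ← sub_mul, bscTransProb_sub_not]

variable (S : Finset (Fin n → Bool)) (i : Fin n)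

theorem bscOut_eq (y : Fin n → Bool) : bscOut S α y = (#S : ℝ)⁻¹ * ∑ x ∈ S, bscKernel α y x :=
  rfl

theorem bscOut_nonneg (h0 : 0 ≤ α) (h1 : α ≤ 1) (y : Fin n → Bool) : 0 ≤ bscOut S α y :=
  mul_nonneg (by positivity) <| sum_nonneg fun _ _ =>
    prod_nonneg fun _ _ => bscTransProb_nonneg h0 h1 _ _

theorem bscOut_shift_add_flipAt (y : Fin n → Bool) :
    bscOut (shift S i) α y + bscOut (shift S i) α (flipAt i y) =
      bscOut S α y + bscOut S α (flipAt i y) := by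
  simp only [bscOut_eq, card_shift, ← mul_add, ← sum_add_distrib]
  congr 1
  refine sum_shift_of_update_eq fun x => ?_
  simp only [bscKernel_flipAt_add, prod_compl_update i (fun j b => bscTransProb α (y j) b)]

theorem abs_sum_bscKernel_sub_flipAt_le (hα : α ∈ Set.Icc (0 : ℝ) (1 / 2)) {y : Fin n → Bool}
    (hy : y i = false) :
    |∑ x ∈ S, (bscKernel α y x - bscKernel α (flipAt i y) x)| ≤
      |∑ x ∈ shift S i, (bscKernel α y x - bscKernel α (flipAt i y) x)| := by
  refine (abs_sum_le_sum_shift (fun x hx => ?_) fun x hx => ?_).trans (le_abs_self _)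
  · simp only [bscKernel_sub_flipAt, hy, hx, update_self, ↓reduceIte, Bool.false_eq_true,
      prod_compl_update i (fun j b => bscTransProb α (y j) b)]
    ring
  · rw [bscKernel_sub_flipAt, hy, hx, if_pos rfl]
    exact mul_nonneg (by linarith [hα.2])
      (prod_nonneg fun _ _ => bscTransProb_nonneg hα.1 (by linarith [hα.2]) _ _)

theorem abs_bscOut_sub_flipAt_le_shift (hα : α ∈ Set.Icc (0 : ℝ) (1 / 2)) (y : Fin n → Bool) :
    |bscOut S α y - bscOut S α (flipAt i y)| ≤
      |bscOut (shift S i) α y - bscOut (shift S i) α (flipAt i y)| := by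
  simp only [bscOut_eq, card_shift, ← mul_sub, ← sum_sub_distrib, abs_mul]
  refine mul_le_mul_of_nonneg_left ?_ (abs_nonneg _)
  cases hy : y i
  · exact abs_sum_bscKernel_sub_flipAt_le S i hα hy
  · have hfy : flipAt i y i = false := by simp [flipAt, hy]
    have hneg (U : Finset (Fin n → Bool)) :
        |∑ x ∈ U, (bscKernel α y x - bscKernel α (flipAt i y) x)| =
          |∑ x ∈ U, (bscKernel α (flipAt i y) x - bscKernel α (flipAt i (flipAt i y)) x)| := by
      rw [flipAt_involutive i y, ← abs_neg, ← sum_neg_distrib]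
      simp only [neg_sub]
    rw [hneg, hneg]
    exact abs_sum_bscKernel_sub_flipAt_le S i hα hfy

end BSC

theorem shift_step_entropy_general (n : ℕ) (α : ℝ) (hα : α ∈ Set.Icc (0:ℝ) (1/2))
    (S T : Finset (Fin n → Bool)) (hstep : shiftStepRel S T) :
    ent (bscOut T α) ≤ ent (bscOut S α) := by
  obtain ⟨i, -, -, rfl⟩ := hstep
  exact ent_le_ent_of_involutive (flipAt_involutive i)
    (bscOut_nonneg _ hα.1 (by linarith [hα.2]))
    (fun y => (bscOut_shift_add_flipAt S i y).symm) (abs_bscOut_sub_flipAt_le_shift S i hα)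

/-- One shifting step does not increase the output entropy of a BSC. -/
theorem shift_step_entropy (n : ℕ) (α : ℝ) (hα : α ∈ Set.Icc (0:ℝ) (1/2))
    (S T : Finset (Fin n → Bool)) (hS : S.Nonempty) (hstep : shiftStepRel S T) :
    ent (bscOut T α) ≤ ent (bscOut S α) :=
  shift_step_entropy_general n α hα S T hstep
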